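/- arXiv:1812.04790 — 2 statements merged into one kernel-verified Lean document; each statement's English description precedes it below -/
import Mathlib

section
/- Fix y_0 ∈ Y. If (T_i) is a sequence of positive integers with T_i → ∞ and γ_i ∈ Γ_{T_i}(y_0) are occupational measures converging in the weak* sense to γ ∈ P(G), then γ ∈ W_2(y_0). In particular, since Γ_T(y_0) ≠ ∅ for every T, the set W_2(y_0) is nonempty. -/
open MeasureTheory Filter Topology Set

noncomputable section

variable {m : ℕ} {U₀ : Type*} [MetricSpace U₀] [CompactSpace U₀]
  [MeasurableSpace U₀] [BorelSpace U₀]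

/-- The set `G = {(y,u) : y ∈ Y, u ∈ U y, f (y,u) ∈ Y}`. -/
def Gset (Y : Set (Fin m → ℝ)) (U : (Fin m → ℝ) → Set U₀)
    (f : (Fin m → ℝ) × U₀ → (Fin m → ℝ)) : Set ((Fin m → ℝ) × U₀) :=
  {p | p.1 ∈ Y ∧ p.2 ∈ U p.1 ∧ f p ∈ Y}

/-- Admissible process from the initial condition `y₀`. -/
def Admissible (Y : Set (Fin m → ℝ)) (U : (Fin m → ℝ) → Set U₀)
    (f : (Fin m → ℝ) × U₀ → (Fin m → ℝ)) (y₀ : Fin m → ℝ)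
    (y : ℕ → (Fin m → ℝ)) (u : ℕ → U₀) : Prop :=
  y 0 = y₀ ∧ ∀ t : ℕ, u t ∈ U (y t) ∧ y t ∈ Y ∧ y (t + 1) = f (y t, u t)

/-- Admissible process without a prescribed initial condition. -/
def AdmissibleProc (Y : Set (Fin m → ℝ)) (U : (Fin m → ℝ) → Set U₀)
    (f : (Fin m → ℝ) × U₀ → (Fin m → ℝ))
    (y : ℕ → (Fin m → ℝ)) (u : ℕ → U₀) : Prop :=
  ∀ t : ℕ, u t ∈ U (y t) ∧ y t ∈ Y ∧ y (t + 1) = f (y t, u t)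

/-- The finite-horizon value function `V_T(y₀)`. -/
def VT (Y : Set (Fin m → ℝ)) (U : (Fin m → ℝ) → Set U₀)
    (f : (Fin m → ℝ) × U₀ → (Fin m → ℝ)) (k : (Fin m → ℝ) × U₀ → ℝ)
    (T : ℕ) (y₀ : Fin m → ℝ) : ℝ :=
  sInf {c | ∃ y u, Admissible Y U f y₀ y u ∧
    c = (∑ t ∈ Finset.range T, k (y t, u t)) / (T : ℝ)}

/-- The discounted value function `h_α(y₀)`. -/
def hdisc (Y : Set (Fin m → ℝ)) (U : (Fin m → ℝ) → Set U₀)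
    (f : (Fin m → ℝ) × U₀ → (Fin m → ℝ)) (k : (Fin m → ℝ) × U₀ → ℝ)
    (α : ℝ) (y₀ : Fin m → ℝ) : ℝ :=
  (1 - α) * sInf {c | ∃ y u, Admissible Y U f y₀ y u ∧
    c = ∑' t : ℕ, α ^ t * k (y t, u t)}

/-- The set `W` of probability measures on `G` with zero drift. -/
def Wset (Y : Set (Fin m → ℝ)) (U : (Fin m → ℝ) → Set U₀)
    (f : (Fin m → ℝ) × U₀ → (Fin m → ℝ)) :
    Set (Measure ((Fin m → ℝ) × U₀)) :=
  {γ | IsProbabilityMeasure γ ∧ γ (Gset Y U f)ᶜ = 0 ∧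
    ∀ φ : (Fin m → ℝ) → ℝ, ContinuousOn φ Y →
      ∫ p, (φ (f p) - φ p.1) ∂γ = 0}

/-- The set `W₁(y₀)`. -/
def W1set (Y : Set (Fin m → ℝ)) (U : (Fin m → ℝ) → Set U₀)
    (f : (Fin m → ℝ) × U₀ → (Fin m → ℝ)) (y₀ : Fin m → ℝ) :
    Set (Measure ((Fin m → ℝ) × U₀)) :=
  {γ | γ ∈ Wset Y U f ∧ ∃ ξ : Measure ((Fin m → ℝ) × U₀),
    IsFiniteMeasure ξ ∧ ξ (Gset Y U f)ᶜ = 0 ∧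
    ∀ φ : (Fin m → ℝ) → ℝ, ContinuousOn φ Y →
      ∫ p, (φ p.1 - φ y₀) ∂γ = ∫ p, (φ (f p) - φ p.1) ∂ξ}

/-- The set `W₂(y₀)`. -/
def W2set (Y : Set (Fin m → ℝ)) (U : (Fin m → ℝ) → Set U₀)
    (f : (Fin m → ℝ) × U₀ → (Fin m → ℝ)) (y₀ : Fin m → ℝ) :
    Set (Measure ((Fin m → ℝ) × U₀)) :=
  {γ | γ ∈ Wset Y U f ∧ ∃ ξ : ℕ → Measure ((Fin m → ℝ) × U₀),
    (∀ i, IsFiniteMeasure (ξ i) ∧ (ξ i) (Gset Y U f)ᶜ = 0) ∧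
    ∀ φ : (Fin m → ℝ) → ℝ, ContinuousOn φ Y →
      Tendsto (fun i => ∫ p, (φ (f p) - φ p.1) ∂(ξ i)) atTop
        (𝓝 (∫ p, (φ p.1 - φ y₀) ∂γ))}

/-- The optimal value `d*(y₀)` of the dual IDLP problem. -/
def dstar (Y : Set (Fin m → ℝ)) (U : (Fin m → ℝ) → Set U₀)
    (f : (Fin m → ℝ) × U₀ → (Fin m → ℝ)) (k : (Fin m → ℝ) × U₀ → ℝ)
    (y₀ : Fin m → ℝ) : ℝ :=
  sSup {μ : ℝ | ∃ ψ η : (Fin m → ℝ) → ℝ, ContinuousOn ψ Y ∧ ContinuousOn η Y ∧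
    ∀ p ∈ Gset Y U f,
      0 ≤ k p + (ψ y₀ - ψ p.1) + η (f p) - η p.1 - μ ∧
      0 ≤ ψ (f p) - ψ p.1}

/-- The optimal value `k*(y₀)` of the primal IDLP problem. -/
def kstar (Y : Set (Fin m → ℝ)) (U : (Fin m → ℝ) → Set U₀)
    (f : (Fin m → ℝ) × U₀ → (Fin m → ℝ)) (k : (Fin m → ℝ) × U₀ → ℝ)
    (y₀ : Fin m → ℝ) : ℝ :=
  sInf {c | ∃ γ ξ : Measure ((Fin m → ℝ) × U₀),
    γ ∈ Wset Y U f ∧ IsFiniteMeasure ξ ∧ ξ (Gset Y U f)ᶜ = 0 ∧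
    (∀ φ : (Fin m → ℝ) → ℝ, ContinuousOn φ Y →
      ∫ p, (φ y₀ - φ p.1) ∂γ + ∫ p, (φ (f p) - φ p.1) ∂ξ = 0) ∧
    c = ∫ p, k p ∂γ}

/-- Occupational measure of a process over `{0, …, T-1}`. -/
def occMeas (y : ℕ → (Fin m → ℝ)) (u : ℕ → U₀) (T : ℕ) :
    Measure ((Fin m → ℝ) × U₀) :=
  (T : ENNReal)⁻¹ • ∑ t ∈ Finset.range T, Measure.dirac (y t, u t)

/-- Discounted occupational measure of a process. -/
def discMeas (α : ℝ) (y : ℕ → (Fin m → ℝ)) (u : ℕ → U₀) :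
    Measure ((Fin m → ℝ) × U₀) :=
  Measure.sum fun t : ℕ =>
    ENNReal.ofReal ((1 - α) * α ^ t) • Measure.dirac (y t, u t)

/-- The set `Γ_T(y₀)` of occupational measures. -/
def GammaT (Y : Set (Fin m → ℝ)) (U : (Fin m → ℝ) → Set U₀)
    (f : (Fin m → ℝ) × U₀ → (Fin m → ℝ)) (y₀ : Fin m → ℝ) (T : ℕ) :
    Set (Measure ((Fin m → ℝ) × U₀)) :=
  {γ | ∃ y u, Admissible Y U f y₀ y u ∧ γ = occMeas y u T}

/-- The set `Θ_α(y₀)` of discounted occupational measures. -/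
def Theta (Y : Set (Fin m → ℝ)) (U : (Fin m → ℝ) → Set U₀)
    (f : (Fin m → ℝ) × U₀ → (Fin m → ℝ)) (α : ℝ) (y₀ : Fin m → ℝ) :
    Set (Measure ((Fin m → ℝ) × U₀)) :=
  {γ | ∃ y u, Admissible Y U f y₀ y u ∧ γ = discMeas α y u}

/-- Weak* convergence of a sequence of measures (tested against functions
continuous on `G`). -/
def WeakStarTendstoOn (G : Set ((Fin m → ℝ) × U₀))
    (γs : ℕ → Measure ((Fin m → ℝ) × U₀))
    (γ : Measure ((Fin m → ℝ) × U₀)) : Prop :=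
  ∀ q : (Fin m → ℝ) × U₀ → ℝ, ContinuousOn q G →
    Tendsto (fun i => ∫ p, q p ∂(γs i)) atTop (𝓝 (∫ p, q p ∂γ))

/-- A `T`-periodic process. -/
def PeriodicProc (y : ℕ → (Fin m → ℝ)) (u : ℕ → U₀) (T : ℕ) : Prop :=
  ∀ t : ℕ, y (t + T) = y t ∧ u (t + T) = u t

/-- The point `z` is finite-time reachable from `y₀`. -/
def FTReachable (Y : Set (Fin m → ℝ)) (U : (Fin m → ℝ) → Set U₀)
    (f : (Fin m → ℝ) × U₀ → (Fin m → ℝ)) (y₀ z : Fin m → ℝ) : Prop :=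
  ∃ (tb : ℕ) (ty : ℕ → (Fin m → ℝ)) (tu : ℕ → U₀),
    Admissible Y U f y₀ ty tu ∧ ty tb = z

/-- The set `Γ_per(y₀)` of occupational measures of periodic processes
finite-time reachable from `y₀`. -/
def GammaPer (Y : Set (Fin m → ℝ)) (U : (Fin m → ℝ) → Set U₀)
    (f : (Fin m → ℝ) × U₀ → (Fin m → ℝ)) (y₀ : Fin m → ℝ) :
    Set (Measure ((Fin m → ℝ) × U₀)) :=
  {γ | ∃ (T : ℕ) (y : ℕ → (Fin m → ℝ)) (u : ℕ → U₀), 1 ≤ T ∧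
    AdmissibleProc Y U f y u ∧ PeriodicProc y u T ∧
    FTReachable Y U f y₀ (y 0) ∧ γ = occMeas y u T}

/-- The optimal value `V_per(y₀)` over periodic regimes. -/
def Vper (Y : Set (Fin m → ℝ)) (U : (Fin m → ℝ) → Set U₀)
    (f : (Fin m → ℝ) × U₀ → (Fin m → ℝ)) (k : (Fin m → ℝ) × U₀ → ℝ)
    (y₀ : Fin m → ℝ) : ℝ :=
  sInf {c | ∃ (T : ℕ) (y : ℕ → (Fin m → ℝ)) (u : ℕ → U₀), 1 ≤ T ∧
    AdmissibleProc Y U f y u ∧ PeriodicProc y u T ∧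
    FTReachable Y U f y₀ (y 0) ∧
    c = (∑ t ∈ Finset.range T, k (y t, u t)) / (T : ℝ)}

/-- The set `K` of continuous functions used in the alternative
representation of the limit optimal values. -/
def Kcal (Y : Set (Fin m → ℝ)) (U : (Fin m → ℝ) → Set U₀)
    (f : (Fin m → ℝ) × U₀ → (Fin m → ℝ)) (k : (Fin m → ℝ) × U₀ → ℝ) :
    Set ((Fin m → ℝ) → ℝ) :=
  {w | ContinuousOn w Y ∧ (∀ p ∈ Gset Y U f, w p.1 ≤ w (f p)) ∧
    ∀ γ ∈ Wset Y U f, ∫ p, w p.1 ∂γ ≤ ∫ p, k p ∂γ}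

/-- The optimal value `d*(θ, y₀)` of the perturbed dual problem. -/
def dstarTheta (Y : Set (Fin m → ℝ)) (U : (Fin m → ℝ) → Set U₀)
    (f : (Fin m → ℝ) × U₀ → (Fin m → ℝ)) (k : (Fin m → ℝ) × U₀ → ℝ)
    (θ : ℝ) (y₀ : Fin m → ℝ) : ℝ :=
  sSup {μ : ℝ | ∃ ψ η : (Fin m → ℝ) → ℝ, ContinuousOn ψ Y ∧ ContinuousOn η Y ∧
    ∀ p ∈ Gset Y U f,
      0 ≤ k p + (ψ y₀ - ψ p.1) + η (f p) - η p.1 - μ ∧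
      -θ ≤ ψ (f p) - ψ p.1}

/-- The optimal value `d̄*(θ, y₀)` of the perturbed dual problem in the
`ψ(y₀)` form. -/
def dbarTheta (Y : Set (Fin m → ℝ)) (U : (Fin m → ℝ) → Set U₀)
    (f : (Fin m → ℝ) × U₀ → (Fin m → ℝ)) (k : (Fin m → ℝ) × U₀ → ℝ)
    (θ : ℝ) (y₀ : Fin m → ℝ) : ℝ :=
  sSup {c : ℝ | ∃ ψ η : (Fin m → ℝ) → ℝ, ContinuousOn ψ Y ∧ ContinuousOn η Y ∧
    (∀ p ∈ Gset Y U f,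
      0 ≤ k p - ψ p.1 + η (f p) - η p.1 ∧
      -θ ≤ ψ (f p) - ψ p.1) ∧ c = ψ y₀}

/-- The optimal value `k*(θ, y₀)` of the perturbed primal problem. -/
def kstarTheta (Y : Set (Fin m → ℝ)) (U : (Fin m → ℝ) → Set U₀)
    (f : (Fin m → ℝ) × U₀ → (Fin m → ℝ)) (k : (Fin m → ℝ) × U₀ → ℝ)
    (θ : ℝ) (y₀ : Fin m → ℝ) : ℝ :=
  sInf {c | ∃ γ ξ : Measure ((Fin m → ℝ) × U₀),
    γ ∈ Wset Y U f ∧ IsFiniteMeasure ξ ∧ ξ (Gset Y U f)ᶜ = 0 ∧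
    (∀ φ : (Fin m → ℝ) → ℝ, ContinuousOn φ Y →
      ∫ p, (φ y₀ - φ p.1) ∂γ + ∫ p, (φ (f p) - φ p.1) ∂ξ = 0) ∧
    c = ∫ p, k p ∂γ + θ * (ξ Set.univ).toReal}

/-! Both halves rest on telescoping along an admissible process. First,
`∫ (φ ∘ f - φ) dγ_T = (φ (y T) - φ (y 0)) / T`, which is `O(1 / T)` for `φ` continuous on the
compact set `Y`; in the weak* limit this gives `γ ∈ W`. Second, writing
`φ (y t) - φ (y 0) = ∑_{s<t} (φ (y (s+1)) - φ (y s))` and averaging over `t < T` gives the exact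
identity `∫ (φ - φ y₀) dγ_T = ∫ (φ ∘ f - φ) dξ_T` for `ξ_T = T⁻¹ ∑_{t<T} ∑_{s<t} δ_(y s, u s)`,
so the measures `ξ_{T_i}` witness `γ ∈ W₂(y₀)`. -/

open scoped NNReal

section SumDirac

variable {α ι : Type*} [MeasurableSpace α] [MeasurableSingletonClass α]

lemma integrable_finsetSum_dirac (s : Finset ι) (a : ι → α) (q : α → ℝ) :
    Integrable q (∑ t ∈ s, Measure.dirac (a t)) :=
  integrable_finsetSum_measure.2 fun _ _ => integrable_dirac enorm_lt_top

lemma integral_finsetSum_dirac (s : Finset ι) (a : ι → α) (q : α → ℝ) :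
    ∫ x, q x ∂(∑ t ∈ s, Measure.dirac (a t)) = ∑ t ∈ s, q (a t) := by
  rw [integral_finsetSum_measure fun _ _ => integrable_dirac enorm_lt_top]
  simp only [integral_dirac]

lemma finsetSum_dirac_apply_compl_eq_zero (s : Finset ι) (a : ι → α) {A : Set α}
    (ha : ∀ t ∈ s, a t ∈ A) : (∑ t ∈ s, Measure.dirac (a t)) Aᶜ = 0 := by
  rw [Measure.finsetSum_apply]
  exact Finset.sum_eq_zero fun t ht => by
    simp [Measure.dirac_apply, Set.indicator_of_notMem, ha t ht]

end SumDirac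

def cumOccMeas {X : Type*} [MeasurableSpace X] (a : ℕ → X) (T : ℕ) : Measure X :=
  (T : ℝ≥0)⁻¹ • ∑ t ∈ Finset.range T, ∑ s ∈ Finset.range t, Measure.dirac (a s)

section CumOccMeas

variable {X : Type*} [MeasurableSpace X]

instance (a : ℕ → X) (T : ℕ) : IsFiniteMeasure (cumOccMeas a T) := by
  unfold cumOccMeas
  infer_instance

variable [MeasurableSingletonClass X]

lemma integral_cumOccMeas (a : ℕ → X) (T : ℕ) (q : X → ℝ) :
    ∫ x, q x ∂(cumOccMeas a T) =
      (T : ℝ)⁻¹ * ∑ t ∈ Finset.range T, ∑ s ∈ Finset.range t, q (a s) := by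
  rw [cumOccMeas, integral_smul_nnreal_measure,
    integral_finsetSum_measure fun t _ => integrable_finsetSum_dirac _ _ q]
  simp only [integral_finsetSum_dirac, NNReal.smul_def, NNReal.coe_inv, NNReal.coe_natCast,
    smul_eq_mul]

lemma cumOccMeas_apply_compl_eq_zero (a : ℕ → X) (T : ℕ) {A : Set X} (ha : ∀ t, a t ∈ A) :
    cumOccMeas a T Aᶜ = 0 := by
  rw [cumOccMeas, Measure.coe_nnreal_smul_apply, Measure.finsetSum_apply,
    Finset.sum_eq_zero fun _ _ => finsetSum_dirac_apply_compl_eq_zero _ _ fun s _ => ha s,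
    mul_zero]

end CumOccMeas

lemma sum_range_sub_comp_step {E V : Type*} (φ : E → ℝ) (f : E × V → E) {y : ℕ → E}
    {u : ℕ → V} (hstep : ∀ t, y (t + 1) = f (y t, u t)) (T : ℕ) :
    ∑ t ∈ Finset.range T, (φ (f (y t, u t)) - φ (y t)) = φ (y T) - φ (y 0) := by
  simp only [← hstep]
  exact Finset.sum_range_sub (fun t => φ (y t)) T

lemma integral_occMeas (y : ℕ → (Fin m → ℝ)) (u : ℕ → U₀) (T : ℕ)
    (q : (Fin m → ℝ) × U₀ → ℝ) :
    ∫ p, q p ∂(occMeas y u T) = (T : ℝ)⁻¹ * ∑ t ∈ Finset.range T, q (y t, u t) := by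
  rw [occMeas, integral_smul_measure, integral_finsetSum_dirac, ENNReal.toReal_inv,
    ENNReal.toReal_natCast, smul_eq_mul]

section Processes

variable {f : (Fin m → ℝ) × U₀ → (Fin m → ℝ)} {y : ℕ → (Fin m → ℝ)} {u : ℕ → U₀}

lemma integral_drift_occMeas (hstep : ∀ t, y (t + 1) = f (y t, u t)) (φ : (Fin m → ℝ) → ℝ)
    (T : ℕ) :
    ∫ p, (φ (f p) - φ p.1) ∂(occMeas y u T) = (T : ℝ)⁻¹ * (φ (y T) - φ (y 0)) := by
  rw [integral_occMeas, sum_range_sub_comp_step φ f hstep]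

lemma integral_drift_cumOccMeas (hstep : ∀ t, y (t + 1) = f (y t, u t))
    (φ : (Fin m → ℝ) → ℝ) (T : ℕ) :
    ∫ p, (φ (f p) - φ p.1) ∂(cumOccMeas (fun t => (y t, u t)) T) =
      ∫ p, (φ p.1 - φ (y 0)) ∂(occMeas y u T) := by
  rw [integral_cumOccMeas, integral_occMeas]
  simp only [sum_range_sub_comp_step φ f hstep]

end Processes

section Gset

variable {V : Type*} {Y : Set (Fin m → ℝ)} {U : (Fin m → ℝ) → Set V}
  {f : (Fin m → ℝ) × V → (Fin m → ℝ)} {φ : (Fin m → ℝ) → ℝ}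

lemma Admissible.mem_Gset {y₀ : Fin m → ℝ} {y : ℕ → (Fin m → ℝ)} {u : ℕ → V}
    (h : Admissible Y U f y₀ y u) (t : ℕ) : (y t, u t) ∈ Gset Y U f :=
  ⟨(h.2 t).2.1, (h.2 t).1, (h.2 t).2.2 ▸ (h.2 (t + 1)).2.1⟩

lemma continuousOn_comp_fst_Gset [TopologicalSpace V] (hφ : ContinuousOn φ Y) :
    ContinuousOn (fun p => φ p.1) (Gset Y U f) :=
  hφ.comp continuous_fst.continuousOn fun _ hp => hp.1

lemma continuousOn_drift_Gset [TopologicalSpace V] (hφ : ContinuousOn φ Y)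
    (hf : Continuous f) :
    ContinuousOn (fun p => φ (f p) - φ p.1) (Gset Y U f) :=
  (hφ.comp hf.continuousOn fun _ hp => hp.2.2).sub (continuousOn_comp_fst_Gset hφ)

end Gset

lemma tendsto_integral_drift_occMeas_zero {Y : Set (Fin m → ℝ)} (hY : IsCompact Y)
    {φ : (Fin m → ℝ) → ℝ} (hφ : ContinuousOn φ Y) {f : (Fin m → ℝ) × U₀ → (Fin m → ℝ)}
    {T : ℕ → ℕ} (hT : Tendsto T atTop atTop) {y : ℕ → ℕ → (Fin m → ℝ)} {u : ℕ → ℕ → U₀}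
    (hstep : ∀ i t, y i (t + 1) = f (y i t, u i t)) (hyY : ∀ i t, y i t ∈ Y) :
    Tendsto (fun i => ∫ p, (φ (f p) - φ p.1) ∂(occMeas (y i) (u i) (T i))) atTop (𝓝 0) := by
  obtain ⟨C, hC⟩ := hY.exists_bound_of_continuousOn hφ
  refine squeeze_zero_norm (fun i => ?_)
    ((tendsto_const_div_atTop_nhds_zero_nat (2 * C)).comp hT)
  rw [integral_drift_occMeas (hstep i), norm_mul, norm_inv, Real.norm_natCast,
    Function.comp_apply, div_eq_inv_mul]
  gcongr
  calc ‖φ (y i (T i)) - φ (y i 0)‖ ≤ ‖φ (y i (T i))‖ + ‖φ (y i 0)‖ := norm_sub_le _ _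
    _ ≤ 2 * C := by linarith [hC _ (hyY i (T i)), hC _ (hyY i 0)]

theorem stmt_0_general
    (Y : Set (Fin m → ℝ)) (hYcomp : IsCompact Y)
    (U : (Fin m → ℝ) → Set U₀)
    (f : (Fin m → ℝ) × U₀ → (Fin m → ℝ)) (hf : Continuous f)
    (y₀ : Fin m → ℝ)
    (Ti : ℕ → ℕ) (hTi : Tendsto Ti atTop atTop)
    (γi : ℕ → Measure ((Fin m → ℝ) × U₀))
    (hγi : ∀ i, γi i ∈ GammaT Y U f y₀ (Ti i))
    (γ : Measure ((Fin m → ℝ) × U₀))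
    (hγP : IsProbabilityMeasure γ) (hγG : γ (Gset Y U f)ᶜ = 0)
    (hconv : WeakStarTendstoOn (Gset Y U f) γi γ) :
    γ ∈ W2set Y U f y₀ ∧ (W2set Y U f y₀).Nonempty := by
  choose y u hadm hocc using hγi
  have hstep : ∀ i t, y i (t + 1) = f (y i t, u i t) := fun i t => ((hadm i).2 t).2.2
  have hW : γ ∈ Wset Y U f := by
    refine ⟨hγP, hγG, fun φ hφ =>
      tendsto_nhds_unique (hconv _ (continuousOn_drift_Gset hφ hf)) ?_⟩
    simpa only [hocc] using
      tendsto_integral_drift_occMeas_zero hYcomp hφ hTi hstep fun i t => ((hadm i).2 t).2.1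
  have hW2 : γ ∈ W2set Y U f y₀ := by
    refine ⟨hW, fun i => cumOccMeas (fun t => (y i t, u i t)) (Ti i),
      fun i => ⟨inferInstance, cumOccMeas_apply_compl_eq_zero _ _ (hadm i).mem_Gset⟩,
      fun φ hφ => ?_⟩
    have hlim := hconv (fun p => φ p.1 - φ y₀)
      ((continuousOn_comp_fst_Gset hφ).sub continuousOn_const)
    simp only [hocc] at hlim
    simpa only [integral_drift_cumOccMeas (hstep _), (hadm _).1] using hlim
  exact ⟨hW2, γ, hW2⟩

theorem stmt_0
    (Y : Set (Fin m → ℝ)) (hYne : Y.Nonempty) (hYcomp : IsCompact Y)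
    (U : (Fin m → ℝ) → Set U₀)
    (hUne : ∀ y ∈ Y, (U y).Nonempty) (hUcomp : ∀ y ∈ Y, IsCompact (U y))
    (hUgraph : IsClosed {p : (Fin m → ℝ) × U₀ | p.1 ∈ Y ∧ p.2 ∈ U p.1})
    (f : (Fin m → ℝ) × U₀ → (Fin m → ℝ)) (hf : Continuous f)
    (k : (Fin m → ℝ) × U₀ → ℝ) (hk : Continuous k)
    (hA : ∀ y ∈ Y, ∃ u ∈ U y, f (y, u) ∈ Y)
    (y₀ : Fin m → ℝ) (hy₀ : y₀ ∈ Y)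
    (Ti : ℕ → ℕ) (hTpos : ∀ i, 1 ≤ Ti i) (hTi : Tendsto Ti atTop atTop)
    (γi : ℕ → Measure ((Fin m → ℝ) × U₀))
    (hγi : ∀ i, γi i ∈ GammaT Y U f y₀ (Ti i))
    (γ : Measure ((Fin m → ℝ) × U₀))
    (hγP : IsProbabilityMeasure γ) (hγG : γ (Gset Y U f)ᶜ = 0)
    (hconv : WeakStarTendstoOn (Gset Y U f) γi γ) :
    γ ∈ W2set Y U f y₀ ∧ (W2set Y U f y₀).Nonempty :=
  stmt_0_general Y hYcomp U f hf y₀ Ti hTi γi hγi γ hγP hγG hconv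
end
end

section
/- Suppose the pointwise limit V(y_0) := lim_{T→∞} V_T(y_0) exists for every y_0 ∈ Y and V is continuous; fix y_0 ∈ Y, and let ψ̄, η̄ : Y → ℝ be continuous functions satisfying k(y,u) + ψ̄(y_0) − ψ̄(y) + η̄(f(y,u)) − η̄(y) ≥ d*(y_0) and ψ̄(f(y,u)) − ψ̄(y) ≥ 0 for all (y,u) ∈ G (an optimal solution of the dual problem). If an admissible process (y(·),u(·)) from y_0 satisfies, for every t ≥ 0, k(y(t),u(t)) − ψ̄(y(t)) + η̄(f(y(t),u(t))) − η̄(y(t)) = V(y_0) − ψ̄(y_0) and ψ̄(y(t)) = ψ̄(y_0), then lim_{T→∞} (1/T) Σ_{t=0}^{T−1} k(y(t),u(t)) = V(y_0); in particular this process attains the infimum in the problem inf over admissible processes from y_0 of liminf_{T→∞} (1/T) Σ_{t=0}^{T−1} k(y(t),u(t)), whose optimal value is V(y_0). -/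
open MeasureTheory Filter Topology Set

noncomputable section

variable {m : ℕ} {U₀ : Type*} [MetricSpace U₀] [CompactSpace U₀]
  [MeasurableSpace U₀] [BorelSpace U₀]

/- The running cost along the given process is `V y₀ + η (y t) - η (y (t+1))`; since `η` is
bounded on the compact `Y`, the telescoping sum shows that its averages tend to `V y₀`. Any other
admissible process has averages at least `V_T(y₀)`, which tends to `V y₀`. -/

theorem sum_range_eq_of_telescoping {a g : ℕ → ℝ} {c : ℝ}
    (h : ∀ t, a t = c + g t - g (t + 1)) (T : ℕ) :
    ∑ t ∈ Finset.range T, a t = T * c + (g 0 - g T) := by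
  rw [← Finset.sum_range_sub' g, Finset.sum_congr rfl fun t _ => h t]
  simp only [add_sub_assoc, Finset.sum_add_distrib, Finset.sum_const, Finset.card_range,
    nsmul_eq_mul]

theorem tendsto_average_of_telescoping {a g : ℕ → ℝ} {c M : ℝ}
    (h : ∀ t, a t = c + g t - g (t + 1)) (hg : ∀ t, |g t| ≤ M) :
    Tendsto (fun T : ℕ => (∑ t ∈ Finset.range T, a t) / T) atTop (𝓝 c) := by
  have hbdd : IsBoundedUnder (· ≤ ·) atTop ((‖·‖) ∘ fun T => g 0 - g T) :=
    isBoundedUnder_of ⟨M + M, fun T => (abs_sub _ _).trans (add_le_add (hg 0) (hg T))⟩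
  have hlim : Tendsto (fun T : ℕ => c + (T : ℝ)⁻¹ * (g 0 - g T)) atTop (𝓝 c) := by
    simpa using tendsto_const_nhds.add
      (tendsto_inv_atTop_nhds_zero_nat.zero_mul_isBoundedUnder_le hbdd)
  refine hlim.congr' ?_
  filter_upwards [eventually_ne_atTop 0] with T hT
  rw [sum_range_eq_of_telescoping h]
  field_simp

theorem abs_average_le {a : ℕ → ℝ} {B : ℝ} (h : ∀ t, |a t| ≤ B) (T : ℕ) :
    |(∑ t ∈ Finset.range T, a t) / T| ≤ B := by
  rcases Nat.eq_zero_or_pos T with rfl | hT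
  · simpa using (abs_nonneg _).trans (h 0)
  rw [abs_div, Nat.abs_cast, div_le_iff₀ (by exact_mod_cast hT)]
  calc |∑ t ∈ Finset.range T, a t| ≤ ∑ t ∈ Finset.range T, |a t| :=
        Finset.abs_sum_le_sum_abs _ _
    _ ≤ ∑ t ∈ Finset.range T, B := Finset.sum_le_sum fun t _ => h t
    _ = B * T := by simp [mul_comm]

theorem le_liminf_of_tendsto_of_le {a b : ℕ → ℝ} {c : ℝ} (hb : Tendsto b atTop (𝓝 c))
    (hba : ∀ n, b n ≤ a n) (ha : IsBoundedUnder (· ≤ ·) atTop a) : c ≤ liminf a atTop :=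
  hb.liminf_eq ▸ liminf_le_liminf (Eventually.of_forall hba) hb.isBoundedUnder_ge
    ha.isCoboundedUnder_ge

section

variable {α : Type*} {Y : Set (Fin m → ℝ)} {U : (Fin m → ℝ) → Set α}
  {f : (Fin m → ℝ) × α → (Fin m → ℝ)} {k : (Fin m → ℝ) × α → ℝ} {B : ℝ}
  {y₀ : Fin m → ℝ} {y : ℕ → (Fin m → ℝ)} {u : ℕ → α}

theorem Admissible.abs_cost_le (hB : ∀ p ∈ Y ×ˢ (univ : Set α), ‖k p‖ ≤ B)
    (hadm : Admissible Y U f y₀ y u) (t : ℕ) :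
    |k (y t, u t)| ≤ B :=
  hB _ ⟨(hadm.2 t).2.1, mem_univ _⟩

theorem VT_le_average (hB : ∀ p ∈ Y ×ˢ (univ : Set α), ‖k p‖ ≤ B)
    (hadm : Admissible Y U f y₀ y u) (T : ℕ) :
    VT Y U f k T y₀ ≤ (∑ t ∈ Finset.range T, k (y t, u t)) / T := by
  refine csInf_le ⟨-B, ?_⟩ ⟨y, u, hadm, rfl⟩
  rintro c ⟨y', u', hadm', rfl⟩
  exact neg_le_of_abs_le (abs_average_le (hadm'.abs_cost_le hB) T)

end

theorem stmt_15_general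
    (Y : Set (Fin m → ℝ)) (hYcomp : IsCompact Y)
    (U : (Fin m → ℝ) → Set U₀)
    (f : (Fin m → ℝ) × U₀ → (Fin m → ℝ))
    (k : (Fin m → ℝ) × U₀ → ℝ) (hk : Continuous k)
    (V : (Fin m → ℝ) → ℝ)
    (hVlim : ∀ z ∈ Y, Tendsto (fun T : ℕ => VT Y U f k T z) atTop (𝓝 (V z)))
    (y₀ : Fin m → ℝ) (hy₀ : y₀ ∈ Y)
    (ψ η : (Fin m → ℝ) → ℝ) (hηc : ContinuousOn η Y)
    (y : ℕ → (Fin m → ℝ)) (u : ℕ → U₀) (hadm : Admissible Y U f y₀ y u)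
    (hproc : ∀ t : ℕ,
      k (y t, u t) - ψ (y t) + η (f (y t, u t)) - η (y t) = V y₀ - ψ y₀ ∧
      ψ (y t) = ψ y₀) :
    Tendsto (fun T : ℕ => (∑ t ∈ Finset.range T, k (y t, u t)) / (T : ℝ))
      atTop (𝓝 (V y₀)) ∧
    ∀ (y' : ℕ → (Fin m → ℝ)) (u' : ℕ → U₀), Admissible Y U f y₀ y' u' →
      V y₀ ≤ liminf
        (fun T : ℕ => (∑ t ∈ Finset.range T, k (y' t, u' t)) / (T : ℝ)) atTop := by
  obtain ⟨B, hB⟩ := (hYcomp.prod isCompact_univ).exists_bound_of_continuousOn hk.continuousOn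
  obtain ⟨M, hM⟩ := hYcomp.exists_bound_of_continuousOn hηc
  have hcost : ∀ t, k (y t, u t) = V y₀ + η (y t) - η (y (t + 1)) := fun t => by
    rw [(hadm.2 t).2.2]
    linarith [hproc t]
  refine ⟨tendsto_average_of_telescoping hcost fun t => hM _ (hadm.2 t).2.1,
    fun y' u' hadm' => ?_⟩
  exact le_liminf_of_tendsto_of_le (hVlim y₀ hy₀) (VT_le_average hB hadm')
    (isBoundedUnder_of ⟨B, fun T => le_of_abs_le (abs_average_le (hadm'.abs_cost_le hB) T)⟩)

theorem stmt_15
    (Y : Set (Fin m → ℝ)) (hYne : Y.Nonempty) (hYcomp : IsCompact Y)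
    (U : (Fin m → ℝ) → Set U₀)
    (hUne : ∀ y ∈ Y, (U y).Nonempty) (hUcomp : ∀ y ∈ Y, IsCompact (U y))
    (hUgraph : IsClosed {p : (Fin m → ℝ) × U₀ | p.1 ∈ Y ∧ p.2 ∈ U p.1})
    (f : (Fin m → ℝ) × U₀ → (Fin m → ℝ)) (hf : Continuous f)
    (k : (Fin m → ℝ) × U₀ → ℝ) (hk : Continuous k)
    (hA : ∀ y ∈ Y, ∃ u ∈ U y, f (y, u) ∈ Y)
    (V : (Fin m → ℝ) → ℝ)
    (hVlim : ∀ z ∈ Y, Tendsto (fun T : ℕ => VT Y U f k T z) atTop (𝓝 (V z)))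
    (hVc : ContinuousOn V Y)
    (y₀ : Fin m → ℝ) (hy₀ : y₀ ∈ Y)
    (ψ η : (Fin m → ℝ) → ℝ) (hψc : ContinuousOn ψ Y) (hηc : ContinuousOn η Y)
    (hopt : ∀ p ∈ Gset Y U f,
      dstar Y U f k y₀ ≤ k p + (ψ y₀ - ψ p.1) + η (f p) - η p.1 ∧
      0 ≤ ψ (f p) - ψ p.1)
    (y : ℕ → (Fin m → ℝ)) (u : ℕ → U₀) (hadm : Admissible Y U f y₀ y u)
    (hproc : ∀ t : ℕ,
      k (y t, u t) - ψ (y t) + η (f (y t, u t)) - η (y t) = V y₀ - ψ y₀ ∧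
      ψ (y t) = ψ y₀) :
    Tendsto (fun T : ℕ => (∑ t ∈ Finset.range T, k (y t, u t)) / (T : ℝ))
      atTop (𝓝 (V y₀)) ∧
    ∀ (y' : ℕ → (Fin m → ℝ)) (u' : ℕ → U₀), Admissible Y U f y₀ y' u' →
      V y₀ ≤ liminf
        (fun T : ℕ => (∑ t ∈ Finset.range T, k (y' t, u' t)) / (T : ℝ)) atTop :=
  stmt_15_general Y hYcomp U f k hk V hVlim y₀ hy₀ ψ η hηc y u hadm hproc
end
end
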